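/- arXiv:2205.04082 — 2 statements merged into one kernel-verified Lean document; each statement's English description precedes it below -/
import Mathlib

section
/- Let n ≥ 4 be an integer with n ≡ 1 (mod 3). Then the maximum of mis(G) over all simple graphs G on n vertices equals 4 · 3^{(n−4)/3}; that is, every graph G on n vertices satisfies mis(G) ≤ 4 · 3^{(n−4)/3}, and some graph on n vertices attains this value. -/
/-- A finset of vertices is independent: no two of its elements are adjacent. -/
def IsIndepFinset {V : Type*} (G : SimpleGraph V) (s : Finset V) : Prop :=
  ∀ ⦃a⦄, a ∈ s → ∀ ⦃b⦄, b ∈ s → ¬ G.Adj a b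

/-- A finset of vertices is a maximal independent set: it is independent and is not
properly contained in any other independent set. -/
def IsMaxIndepFinset {V : Type*} (G : SimpleGraph V) (s : Finset V) : Prop :=
  IsIndepFinset G s ∧ ∀ t : Finset V, IsIndepFinset G t → s ⊆ t → s = t

/-- `mis G` is the number of maximal independent sets of `G`. -/
noncomputable def mis {V : Type*} (G : SimpleGraph V) : ℕ :=
  Set.ncard {s : Finset V | IsMaxIndepFinset G s}

/-- `G` has an induced triangle matching of size `t`: there are `t` pairwise disjoint
triples of vertices, each triple pairwise adjacent (a triangle), with no edges between
distinct triples (so the induced subgraph on their union is a disjoint union of `t`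
triangles). -/
def HasInducedTriangleMatching {V : Type*} (G : SimpleGraph V) (t : ℕ) : Prop :=
  ∃ f : Fin t → Finset V,
    (∀ i, (f i).card = 3) ∧
    (∀ i j, i ≠ j → Disjoint (f i) (f j)) ∧
    (∀ i, ∀ a ∈ f i, ∀ b ∈ f i, a ≠ b → G.Adj a b) ∧
    (∀ i j, i ≠ j → ∀ a ∈ f i, ∀ b ∈ f j, ¬ G.Adj a b)

/-- `G` has an induced matching of size `t`: there are `t` pairwise disjoint
pairs of vertices, each pair adjacent, with no edges between distinct pairs. -/
def HasInducedMatching {V : Type*} (G : SimpleGraph V) (t : ℕ) : Prop :=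
  ∃ f : Fin t → Finset V,
    (∀ i, (f i).card = 2) ∧
    (∀ i j, i ≠ j → Disjoint (f i) (f j)) ∧
    (∀ i, ∀ a ∈ f i, ∀ b ∈ f i, a ≠ b → G.Adj a b) ∧
    (∀ i j, i ≠ j → ∀ a ∈ f i, ∀ b ∈ f j, ¬ G.Adj a b)

/-!
Let `δ` be the minimum degree of `G`, attained at `v`. A maximal independent set is dominating,
so it contains a vertex `u` of the closed neighbourhood `N[v]`, and removing `u` maps it
injectively to a maximal independent set of `G - N[u]`, a graph on at most `n - 1 - δ` vertices.
By induction `mis G ≤ (δ + 1) g(n - 1 - δ)`, and the Moon–Moser function `g` (`3 ^ (n / 3)`,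
`4 * 3 ^ ((n - 4) / 3)` or `2 * 3 ^ ((n - 2) / 3)` according to `n % 3`, for `n ≥ 2`) satisfies
`k g(m) ≤ g(m + k)`. The bound is attained by `K₄` plus `t` disjoint triangles: a maximal
independent set of a disjoint union of cliques picks exactly one vertex from each clique.
-/

open Finset

def moonMoser : ℕ → ℕ
  | 0 => 1
  | 1 => 1
  | 2 => 2
  | 3 => 3
  | 4 => 4
  | n + 5 => 3 * moonMoser (n + 2)

lemma moonMoser_add_three {n : ℕ} (hn : 2 ≤ n) : moonMoser (n + 3) = 3 * moonMoser n := by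
  obtain ⟨m, rfl⟩ := Nat.exists_eq_add_of_le' hn
  rfl

lemma moonMoser_four_add_three_mul (t : ℕ) : moonMoser (4 + 3 * t) = 4 * 3 ^ t := by
  induction t with
  | zero => rfl
  | succ t ih => rw [mul_add_one, ← add_assoc, moonMoser_add_three (by omega), ih, pow_succ]; ring

lemma moonMoser_le_succ (n : ℕ) : moonMoser n ≤ moonMoser (n + 1) := by
  induction n using moonMoser.induct with
  | case6 n ih => exact Nat.mul_le_mul_left 3 ih
  | _ => decide

lemma moonMoser_pos (n : ℕ) : 0 < moonMoser n := by
  induction n using moonMoser.induct with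
  | case6 n ih => exact Nat.mul_pos three_pos ih
  | _ => decide

lemma monotone_moonMoser : Monotone moonMoser := monotone_nat_of_le_succ moonMoser_le_succ

lemma two_mul_moonMoser_le (n : ℕ) : 2 * moonMoser n ≤ moonMoser (n + 2) := by
  induction n using moonMoser.induct with
  | case6 n ih => show 2 * (3 * _) ≤ 3 * _; omega
  | _ => decide

lemma three_mul_moonMoser_le (n : ℕ) : 3 * moonMoser n ≤ moonMoser (n + 3) := by
  match n with
  | 0 | 1 => decide
  | n + 2 => rw [moonMoser_add_three (by omega)]

theorem mul_moonMoser_le : ∀ {k : ℕ}, 1 ≤ k → ∀ m, k * moonMoser m ≤ moonMoser (m + k)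
  | 1, _, m => by simpa using moonMoser_le_succ m
  | 2, _, m => two_mul_moonMoser_le m
  | 3, _, m => three_mul_moonMoser_le m
  | k + 4, _, m => calc
      (k + 4) * moonMoser m ≤ 2 * ((k + 2) * moonMoser m) := by nlinarith
      _ ≤ 2 * moonMoser (m + (k + 2)) := by gcongr; exact mul_moonMoser_le (by omega) m
      _ ≤ moonMoser (m + (k + 4)) := two_mul_moonMoser_le _

variable {V : Type*} {G : SimpleGraph V}

lemma IsIndepFinset.insert [DecidableEq V] {s : Finset V} {v : V} (hs : IsIndepFinset G s)
    (hv : ∀ u ∈ s, ¬ G.Adj v u) : IsIndepFinset G (insert v s) := by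
  intro a ha b hb
  rcases mem_insert.mp ha with rfl | has <;> rcases mem_insert.mp hb with rfl | hbs
  · exact G.irrefl
  · exact hv b hbs
  · exact fun h => hv a has h.symm
  · exact hs has hbs

lemma IsMaxIndepFinset.mem_or_exists_adj {s : Finset V} (hs : IsMaxIndepFinset G s) (v : V) :
    v ∈ s ∨ ∃ u ∈ s, G.Adj v u := by
  classical
  by_contra! h
  have := hs.2 _ (hs.1.insert h.2) (subset_insert v s)
  exact h.1 (this ▸ mem_insert_self v s)

lemma ncard_isMaxIndepFinset_mem_le_mis_induce [Finite V] (u : V) :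
    {s | IsMaxIndepFinset G s ∧ u ∈ s}.ncard ≤ mis (G.induce (insert u (G.neighborSet u))ᶜ) := by
  classical
  set S := (insert u (G.neighborSet u))ᶜ
  let restrict (s : Finset V) : Finset S := s.subtype (· ∈ S)
  let lift (t : Finset S) : Finset V := insert u (t.map (Function.Embedding.subtype _))
  have lift_restrict : ∀ s, IsIndepFinset G s → u ∈ s → lift (restrict s) = s := by
    intro s hs hu
    ext w
    by_cases hw : w = u
    · simp [lift, hw, hu]
    · have : w ∈ s → w ∈ S := fun hws => by simp [S, hw, hs hu hws]
      simpa [lift, restrict, hw]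
  have lift_indep : ∀ t, IsIndepFinset (G.induce S) t → IsIndepFinset G (lift t) := by
    intro t ht
    refine IsIndepFinset.insert ?_ ?_
    · simp only [IsIndepFinset, mem_map, Function.Embedding.subtype_apply]
      rintro _ ⟨a, ha, rfl⟩ _ ⟨b, hb, rfl⟩
      exact ht ha hb
    · simp only [mem_map, Function.Embedding.subtype_apply]
      rintro _ ⟨w, -, rfl⟩
      exact fun h => w.2 (Or.inr h)
  refine Set.ncard_le_ncard_of_injOn restrict ?_ ?_
  · rintro s ⟨hs, hu⟩
    refine ⟨fun a ha b hb => hs.1 (mem_subtype.mp ha) (mem_subtype.mp hb), fun t ht hst => ?_⟩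
    have hlift : s = lift t := hs.2 _ (lift_indep t ht) <| by
      rw [← lift_restrict s hs.1 hu]
      exact insert_subset_insert u (map_subset_map.mpr hst)
    refine hst.antisymm fun w hw => mem_subtype.mpr ?_
    rw [hlift]
    exact mem_insert_of_mem (mem_map_of_mem _ hw)
  · rintro s₁ ⟨hs₁, hu₁⟩ s₂ ⟨hs₂, hu₂⟩ h
    rw [← lift_restrict s₁ hs₁.1 hu₁, ← lift_restrict s₂ hs₂.1 hu₂]
    exact congrArg lift h

lemma natCard_compl_insert_neighborSet_add [Fintype V] [DecidableRel G.Adj] (u : V) :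
    Nat.card ↥(insert u (G.neighborSet u))ᶜ + (G.degree u + 1) = Fintype.card V := by
  rw [← G.card_neighborSet_eq_degree, ← Nat.card_eq_fintype_card, Nat.card_coe_set_eq,
    Nat.card_coe_set_eq,
    ← Set.ncard_insert_of_notMem G.notMem_neighborSet_self, Set.ncard_compl_add_ncard,
    Nat.card_eq_fintype_card]

theorem mis_le_moonMoser [Finite V] (G : SimpleGraph V) : mis G ≤ moonMoser (Nat.card V) := by
  induction hn : Nat.card V using Nat.strong_induction_on generalizing V with
  | _ n ih =>
  cases isEmpty_or_nonempty V with
  | inl _ => exact (Set.ncard_le_one_of_subsingleton _).trans (moonMoser_pos n)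
  | inr _ =>
  classical
  have := Fintype.ofFinite V
  obtain ⟨v, hv⟩ := G.exists_minimal_degree_vertex
  set δ := G.minDegree
  rw [Nat.card_eq_fintype_card] at hn
  have hδ : δ < n := hn ▸ hv ▸ G.degree_lt_card_verts v
  have hcover : {s | IsMaxIndepFinset G s} ⊆
      ⋃ u ∈ insert v (G.neighborFinset v), {s | IsMaxIndepFinset G s ∧ u ∈ s} := by
    intro s hs
    obtain hvs | ⟨u, hus, hvu⟩ := hs.mem_or_exists_adj v
    · exact Set.mem_biUnion (mem_insert_self v _) ⟨hs, hvs⟩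
    · exact Set.mem_biUnion (mem_insert_of_mem ((G.mem_neighborFinset v u).mpr hvu)) ⟨hs, hus⟩
  have hrestrict : ∀ u, {s | IsMaxIndepFinset G s ∧ u ∈ s}.ncard ≤ moonMoser (n - (δ + 1)) := by
    intro u
    have hsize := natCard_compl_insert_neighborSet_add (G := G) u
    have hdeg := G.minDegree_le_degree u
    calc _ ≤ mis (G.induce (insert u (G.neighborSet u))ᶜ) :=
          ncard_isMaxIndepFinset_mem_le_mis_induce u
      _ ≤ moonMoser (Nat.card ↥(insert u (G.neighborSet u))ᶜ) := ih _ (by omega) _ rfl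
      _ ≤ moonMoser (n - (δ + 1)) := monotone_moonMoser (by omega)
  calc mis G ≤ (⋃ u ∈ insert v (G.neighborFinset v), {s | IsMaxIndepFinset G s ∧ u ∈ s}).ncard :=
        Set.ncard_le_ncard hcover
    _ ≤ ∑ u ∈ insert v (G.neighborFinset v), {s | IsMaxIndepFinset G s ∧ u ∈ s}.ncard :=
        set_ncard_biUnion_le _ _
    _ ≤ ∑ u ∈ insert v (G.neighborFinset v), moonMoser (n - (δ + 1)) :=
        sum_le_sum fun u _ => hrestrict u
    _ = (δ + 1) * moonMoser (n - (δ + 1)) := by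
        rw [sum_const, card_insert_of_notMem (G.notMem_neighborFinset_self v),
          G.card_neighborFinset_eq_degree, ← hv, smul_eq_mul]
    _ ≤ moonMoser n := by
        simpa [Nat.sub_add_cancel hδ] using mul_moonMoser_le (k := δ + 1) (by omega) (n - (δ + 1))

lemma isIndepFinset_map_iff {W : Type*} {H : SimpleGraph W} (f : G ↪g H) {s : Finset V} :
    IsIndepFinset H (s.map f.toEmbedding) ↔ IsIndepFinset G s := by
  simp [IsIndepFinset]

lemma isMaxIndepFinset_finsetCongr_iff {W : Type*} {H : SimpleGraph W} (e : G ≃g H)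
    {s : Finset V} : IsMaxIndepFinset H (e.toEquiv.finsetCongr s) ↔ IsMaxIndepFinset G s := by
  simp only [IsMaxIndepFinset, e.toEquiv.finsetCongr.surjective.forall, Equiv.finsetCongr_apply,
    map_subset_map, map_inj]
  exact and_congr (isIndepFinset_map_iff e.toEmbedding) (forall_congr' fun t =>
    imp_congr_left (isIndepFinset_map_iff e.toEmbedding))

lemma mis_congr {W : Type*} {H : SimpleGraph W} (e : G ≃g H) : mis G = mis H := by
  rw [mis, mis, ← Nat.card_coe_set_eq, ← Nat.card_coe_set_eq]
  exact Nat.card_congr <|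
    e.toEquiv.finsetCongr.subtypeEquiv fun s => (isMaxIndepFinset_finsetCongr_iff e).symm

section DisjointCliques

variable {ι : Type*} {α : ι → Type*}

lemma compl_completeMultipartiteGraph_adj {a b : Σ i, α i} :
    (SimpleGraph.completeMultipartiteGraph α)ᶜ.Adj a b ↔ a ≠ b ∧ a.1 = b.1 := by
  simp

variable [Fintype ι]

def sigmaGraphFinset (f : ∀ i, α i) : Finset (Σ i, α i) :=
  univ.map ⟨fun i => ⟨i, f i⟩, fun _ _ h => congrArg Sigma.fst h⟩

lemma mem_sigmaGraphFinset {f : ∀ i, α i} {a : Σ i, α i} :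
    a ∈ sigmaGraphFinset f ↔ ⟨a.1, f a.1⟩ = a := by
  simp only [sigmaGraphFinset, mem_map, mem_univ, true_and]
  exact ⟨by rintro ⟨i, rfl⟩; rfl, fun h => ⟨a.1, h⟩⟩

lemma sigmaGraphFinset_injective : Function.Injective (sigmaGraphFinset (α := α)) := by
  intro f g h
  funext i
  have : (⟨i, f i⟩ : Σ i, α i) ∈ sigmaGraphFinset g := h ▸ mem_sigmaGraphFinset.mpr rfl
  exact (sigma_mk_injective (mem_sigmaGraphFinset.mp this)).symm

lemma isMaxIndepFinset_sigmaGraphFinset (f : ∀ i, α i) :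
    IsMaxIndepFinset (SimpleGraph.completeMultipartiteGraph α)ᶜ (sigmaGraphFinset f) := by
  refine ⟨?_, fun t ht hft => hft.antisymm fun a ha => ?_⟩
  · intro a ha b hb
    rw [compl_completeMultipartiteGraph_adj, ← mem_sigmaGraphFinset.mp ha,
      ← mem_sigmaGraphFinset.mp hb]
    rintro ⟨hne, hfst⟩
    exact hne (by rw [hfst])
  · by_contra hfa
    have hmem : (⟨a.1, f a.1⟩ : Σ i, α i) ∈ t := hft (mem_sigmaGraphFinset.mpr rfl)
    exact ht ha hmem (compl_completeMultipartiteGraph_adj.mpr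
      ⟨fun h => hfa (mem_sigmaGraphFinset.mpr h.symm), rfl⟩)

lemma exists_sigmaGraphFinset_eq [∀ i, Nonempty (α i)] {s : Finset (Σ i, α i)}
    (hs : IsMaxIndepFinset (SimpleGraph.completeMultipartiteGraph α)ᶜ s) :
    ∃ f, sigmaGraphFinset f = s := by
  have hmeets : ∀ i, ∃ x : α i, ⟨i, x⟩ ∈ s := by
    intro i
    obtain hi | ⟨⟨j, y⟩, hy, hadj⟩ := hs.mem_or_exists_adj ⟨i, Classical.arbitrary (α i)⟩
    · exact ⟨_, hi⟩
    · obtain rfl : i = j := (compl_completeMultipartiteGraph_adj.mp hadj).2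
      exact ⟨y, hy⟩
  choose f hf using hmeets
  refine ⟨f, (isMaxIndepFinset_sigmaGraphFinset f).2 s hs.1 fun a ha => ?_⟩
  rw [← mem_sigmaGraphFinset.mp ha]
  exact hf a.1

theorem mis_compl_completeMultipartiteGraph [∀ i, Nonempty (α i)] :
    mis (SimpleGraph.completeMultipartiteGraph α)ᶜ = ∏ i, Nat.card (α i) := by
  have hrange : {s | IsMaxIndepFinset (SimpleGraph.completeMultipartiteGraph α)ᶜ s} =
      Set.range sigmaGraphFinset := by
    ext s
    exact ⟨exists_sigmaGraphFinset_eq, by rintro ⟨f, rfl⟩; exact isMaxIndepFinset_sigmaGraphFinset f⟩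
  rw [mis, hrange, Set.ncard_range_of_injective sigmaGraphFinset_injective, Nat.card_pi]

end DisjointCliques

theorem exists_mis_eq_four_mul_three_pow (t : ℕ) :
    ∃ G : SimpleGraph (Fin (4 + 3 * t)), mis G = 4 * 3 ^ t := by
  let cliqueSize : Option (Fin t) → ℕ := fun i => i.elim 4 fun _ => 3
  have : ∀ i, Nonempty (Fin (cliqueSize i)) := fun i =>
    Fin.pos_iff_nonempty.mp (by cases i <;> simp [cliqueSize])
  let H := (SimpleGraph.completeMultipartiteGraph fun i => Fin (cliqueSize i))ᶜ
  have hcard : Nat.card (Σ i, Fin (cliqueSize i)) = 4 + 3 * t := by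
    simp [cliqueSize, Fintype.sum_option, mul_comm]
  let e := Finite.equivFinOfCardEq hcard
  refine ⟨H.comap e.symm, ?_⟩
  rw [mis_congr (SimpleGraph.Iso.comap e.symm H), mis_compl_completeMultipartiteGraph]
  simp [cliqueSize, Fintype.prod_option]

theorem moon_moser_one_mod_three (n : ℕ) (hn : 4 ≤ n) (hmod : n % 3 = 1) :
    (∀ G : SimpleGraph (Fin n), mis G ≤ 4 * 3 ^ ((n - 4) / 3)) ∧
    (∃ G : SimpleGraph (Fin n), mis G = 4 * 3 ^ ((n - 4) / 3)) := by
  obtain ⟨t, rfl⟩ : ∃ t, n = 4 + 3 * t := ⟨(n - 4) / 3, by omega⟩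
  rw [show (4 + 3 * t - 4) / 3 = t by omega]
  refine ⟨fun G => ?_, exists_mis_eq_four_mul_three_pow t⟩
  simpa [moonMoser_four_add_three_mul] using mis_le_moonMoser G
end

section
/- Let n ≥ 4 be an even integer. Then the maximum of mis(G) over all triangle-free simple graphs G on n vertices equals 2^{n/2}; that is, every triangle-free graph G on n vertices satisfies mis(G) ≤ 2^{n/2}, and some triangle-free graph on n vertices attains this value. -/
/-!
By strong induction on `n`, `mis G ^ 2 ≤ 2 ^ n` for triangle-free `G` on `n` vertices. Take a
vertex `v` of minimum degree `δ`. Every maximal independent set meets the closed neighbourhood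
`N[v]`, and those containing `x` restrict injectively to maximal independent sets of `G - N[x]`,
a graph on at most `n - δ - 1` vertices. Cauchy–Schwarz over `N[v]` gives
`mis G ^ 2 ≤ (δ + 1) ^ 2 * 2 ^ (n - δ - 1) ≤ 2 ^ n` unless `δ = 2`. If `N(v) = {u, w}`, then `u`
and `w` are not adjacent, so the sets containing `w` but not `u` restrict to `G - N[w] - u`, on
at most `n - 4` vertices, and `12 (a + b + c) ^ 2 ≤ 32 a ^ 2 + 32 b ^ 2 + 48 c ^ 2` closes the
case. A perfect matching attains the bound: its maximal independent sets choose one end of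
every edge.
-/

section MaximalIndependentSets

variable {V W : Type*} {G : SimpleGraph V} {H : SimpleGraph W}

theorem isMaxIndepFinset_iff {S : Finset V} :
    IsMaxIndepFinset G S ↔ IsIndepFinset G S ∧ ∀ x ∉ S, ∃ y ∈ S, G.Adj x y := by
  classical
  refine ⟨fun hS => ⟨hS.1, fun x hxS => ?_⟩, fun ⟨hS, hdom⟩ => ⟨hS, fun T hT hST => ?_⟩⟩
  · by_contra! hx
    have hind : IsIndepFinset G (insert x S) := by
      intro a ha b hb
      rw [Finset.mem_insert] at ha hb
      rcases ha with rfl | ha <;> rcases hb with rfl | hb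
      exacts [G.irrefl, hx b hb, fun hab => hx a ha hab.symm, hS.1 ha hb]
    exact hxS (hS.2 _ hind (Finset.subset_insert x S) ▸ Finset.mem_insert_self x S)
  · refine hST.antisymm fun x hxT => ?_
    by_contra hxS
    obtain ⟨y, hyS, hxy⟩ := hdom x hxS
    exact hT hxT (hST hyS) hxy

theorem IsMaxIndepFinset.map_iso {S : Finset V} (hS : IsMaxIndepFinset G S) (e : G ≃g H) :
    IsMaxIndepFinset H (S.map e.toEquiv.toEmbedding) := by
  rw [isMaxIndepFinset_iff] at hS ⊢
  refine ⟨fun a ha b hb hab => ?_, fun x hx => ?_⟩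
  · rw [Finset.mem_map_equiv] at ha hb
    exact hS.1 ha hb (e.symm.map_adj_iff.mpr hab)
  · obtain ⟨y, hyS, hxy⟩ := hS.2 (e.symm x) (by rwa [Finset.mem_map_equiv] at hx)
    refine ⟨e y, Finset.mem_map_of_mem _ hyS, ?_⟩
    simpa using e.map_adj_iff.mpr hxy

theorem mis_le_of_iso [Finite W] (e : G ≃g H) : mis G ≤ mis H :=
  Set.ncard_le_ncard_of_injOn _ (fun _ hS => IsMaxIndepFinset.map_iso hS e)
    (Finset.map_injective _).injOn

theorem SimpleGraph.Iso.mis_eq [Finite V] [Finite W] (e : G ≃g H) : mis G = mis H :=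
  (mis_le_of_iso e).antisymm (mis_le_of_iso e.symm)

theorem IsMaxIndepFinset.subtype_compl {S : Finset V} {A : Set V} {v : V} [DecidablePred (· ∈ A)]
    (hS : IsMaxIndepFinset G S) (hNA : ∀ x, G.Adj v x → x ∈ A)
    (hSA : ∀ a ∈ S, a ∈ A → a = v) :
    IsMaxIndepFinset (G.induce Aᶜ) (S.subtype (· ∈ Aᶜ)) := by
  rw [isMaxIndepFinset_iff] at hS ⊢
  refine ⟨fun a ha b hb => hS.1 (Finset.mem_subtype.mp ha) (Finset.mem_subtype.mp hb),
    fun x hx => ?_⟩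
  obtain ⟨y, hyS, hxy⟩ := hS.2 x (by simpa using hx)
  have hyA : y ∉ A := fun hyA => x.2 (hNA x (hSA y hyS hyA ▸ hxy.symm))
  exact ⟨⟨y, hyA⟩, Finset.mem_subtype.mpr hyS, hxy⟩

end MaximalIndependentSets

theorem sq_le_two_pow_of_ne_three {k : ℕ} (hk : k ≠ 3) : k ^ 2 ≤ 2 ^ k := by
  rcases Nat.lt_or_ge k 4 with hk4 | hk4
  · interval_cases k <;> simp_all
  · induction k, hk4 using Nat.le_induction with
    | base => norm_num
    | succ k hk4 ih =>
      rw [pow_succ 2 k]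
      nlinarith [ih (by omega)]

theorem sq_sum_le_of_forall_sq_mul_le {ι : Type*} {s : Finset ι} {a : ι → ℕ} {N : ℕ}
    (hs : s.card ≠ 3) (h : ∀ i ∈ s, a i ^ 2 * 2 ^ s.card ≤ N) : (∑ i ∈ s, a i) ^ 2 ≤ N := by
  refine Nat.le_of_mul_le_mul_right ?_ (Nat.two_pow_pos s.card)
  calc (∑ i ∈ s, a i) ^ 2 * 2 ^ s.card
      ≤ (s.card * ∑ i ∈ s, a i ^ 2) * 2 ^ s.card := by gcongr; exact sq_sum_le_card_mul_sum_sq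
    _ = s.card * ∑ i ∈ s, a i ^ 2 * 2 ^ s.card := by rw [mul_assoc, Finset.sum_mul]
    _ ≤ s.card * (s.card * N) := by gcongr; exact Finset.sum_le_card_nsmul _ _ _ h
    _ = s.card ^ 2 * N := by ring
    _ ≤ 2 ^ s.card * N := Nat.mul_le_mul_right _ (sq_le_two_pow_of_ne_three hs)
    _ = N * 2 ^ s.card := mul_comm _ _

theorem sq_add_add_le {a b c N : ℕ} (ha : a ^ 2 * 2 ^ 3 ≤ N) (hb : b ^ 2 * 2 ^ 3 ≤ N)
    (hc : c ^ 2 * 2 ^ 4 ≤ N) : (a + b + c) ^ 2 ≤ N := by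
  nlinarith [sq_nonneg ((a : ℤ) - b), sq_nonneg (2 * (a : ℤ) - 3 * c),
    sq_nonneg (2 * (b : ℤ) - 3 * c)]

def maxIndepThrough {V : Type*} (G : SimpleGraph V) (v : V) (B : Finset V) : Set (Finset V) :=
  {S | IsMaxIndepFinset G S ∧ v ∈ S ∧ Disjoint S B}

section TriangleFree

variable {V : Type*} [Fintype V] [DecidableEq V] {G : SimpleGraph V} [DecidableRel G.Adj]

theorem ncard_maxIndepThrough_le_mis (v : V) (B : Finset V) :
    (maxIndepThrough G v B).ncard ≤
      mis (G.induce (↑(insert v (G.neighborFinset v) ∪ B) : Set V)ᶜ) := by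
  set A : Set V := ↑(insert v (G.neighborFinset v) ∪ B)
  have hSA : ∀ S ∈ maxIndepThrough G v B, ∀ a ∈ S, a ∈ A → a = v := by
    rintro S ⟨hS, hvS, hSB⟩ a haS haA
    simp only [A, Finset.coe_union, Finset.coe_insert, SimpleGraph.coe_neighborFinset,
      Set.mem_union, Set.mem_insert_iff, SimpleGraph.mem_neighborSet, Finset.mem_coe] at haA
    rcases haA with (rfl | hva) | haB
    · rfl
    · exact absurd hva (hS.1 hvS haS)
    · exact absurd haB (Finset.disjoint_left.mp hSB haS)
  refine Set.ncard_le_ncard_of_injOn (·.subtype (· ∈ Aᶜ))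
    (fun S hS => hS.1.subtype_compl (fun x hx => by simp [A, hx]) (hSA S hS))
    (fun S hS T hT hST => Finset.ext fun a => ?_)
  by_cases haA : a ∈ A
  · exact ⟨fun haS => hSA S hS a haS haA ▸ hT.2.1, fun haT => hSA T hT a haT haA ▸ hS.2.1⟩
  · simpa [haA] using congrArg (⟨a, haA⟩ ∈ ·) hST

theorem mis_le_sum_ncard_maxIndepThrough (v : V) :
    mis G ≤ ∑ x ∈ insert v (G.neighborFinset v), (maxIndepThrough G x ∅).ncard := by
  refine (Set.ncard_le_ncard fun S hS => ?_).trans (Finset.set_ncard_biUnion_le _ _)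
  simp only [Set.mem_iUnion]
  by_cases hvS : v ∈ S
  · exact ⟨v, Finset.mem_insert_self _ _, hS, hvS, Finset.disjoint_empty_right S⟩
  · obtain ⟨y, hyS, hvy⟩ := (isMaxIndepFinset_iff.mp hS).2 v hvS
    exact ⟨y, Finset.mem_insert_of_mem ((G.mem_neighborFinset v y).mpr hvy), hS, hyS,
      Finset.disjoint_empty_right S⟩

theorem mis_le_of_neighborFinset_eq_pair {v u w : V} (hN : G.neighborFinset v = {u, w}) :
    mis G ≤ (maxIndepThrough G v ∅).ncard + (maxIndepThrough G u ∅).ncard +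
      (maxIndepThrough G w {u}).ncard := by
  refine (Set.ncard_le_ncard fun S hS => ?_).trans
    ((Set.ncard_union_le _ _).trans (Nat.add_le_add_right (Set.ncard_union_le _ _) _))
  by_cases hvS : v ∈ S
  · exact Or.inl (Or.inl ⟨hS, hvS, Finset.disjoint_empty_right S⟩)
  by_cases huS : u ∈ S
  · exact Or.inl (Or.inr ⟨hS, huS, Finset.disjoint_empty_right S⟩)
  obtain ⟨y, hyS, hvy⟩ := (isMaxIndepFinset_iff.mp hS).2 v hvS
  rw [← G.mem_neighborFinset, hN, Finset.mem_insert, Finset.mem_singleton] at hvy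
  obtain rfl | rfl := hvy
  · exact absurd hyS huS
  · exact Or.inr ⟨hS, hyS, Finset.disjoint_singleton_right.mpr huS⟩

theorem mis_sq_le_of_forall_induce_compl [Nonempty V] (hG : G.CliqueFree 3)
    (ih : ∀ A : Finset V, A.Nonempty →
      mis (G.induce (↑A : Set V)ᶜ) ^ 2 * 2 ^ A.card ≤ 2 ^ Fintype.card V) :
    mis G ^ 2 ≤ 2 ^ Fintype.card V := by
  have hclosed : ∀ x, (insert x (G.neighborFinset x)).card = G.degree x + 1 := fun x => by
    rw [Finset.card_insert_of_notMem (G.notMem_neighborFinset_self x),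
      G.card_neighborFinset_eq_degree]
  have hthrough : ∀ x B, (maxIndepThrough G x B).ncard ^ 2 *
      2 ^ (insert x (G.neighborFinset x) ∪ B).card ≤ 2 ^ Fintype.card V := fun x B =>
    (Nat.mul_le_mul_right _ (Nat.pow_le_pow_left (ncard_maxIndepThrough_le_mis x B) 2)).trans
      (ih _ ⟨x, by simp⟩)
  have hcontain : ∀ x, (maxIndepThrough G x ∅).ncard ^ 2 * 2 ^ (G.minDegree + 1) ≤
      2 ^ Fintype.card V := fun x => by
    refine le_trans (Nat.mul_le_mul_left _ (Nat.pow_le_pow_right two_pos ?_)) (hthrough x ∅)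
    rw [Finset.union_empty, hclosed]
    exact Nat.succ_le_succ (G.minDegree_le_degree x)
  obtain ⟨v, hv⟩ := G.exists_minimal_degree_vertex
  by_cases hδ : G.minDegree = 2
  · obtain ⟨u, w, huw, hN⟩ := Finset.card_eq_two.mp
      (by rwa [G.card_neighborFinset_eq_degree, ← hv] : (G.neighborFinset v).card = 2)
    have hvu : G.Adj v u := (G.mem_neighborFinset v u).mp (by simp [hN])
    have hvw : G.Adj v w := (G.mem_neighborFinset v w).mp (by simp [hN])
    have hwu : ¬G.Adj w u := fun h => hG _ (SimpleGraph.is3Clique_triple_iff.mpr ⟨hvw, hvu, h⟩)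
    have hcontain_avoid : (maxIndepThrough G w {u}).ncard ^ 2 * 2 ^ 4 ≤ 2 ^ Fintype.card V := by
      refine le_trans (Nat.mul_le_mul_left _ (Nat.pow_le_pow_right two_pos ?_)) (hthrough w {u})
      have hu : u ∉ insert w (G.neighborFinset w) := by
        simpa [huw] using hwu
      rw [Finset.union_singleton, Finset.card_insert_of_notMem hu, hclosed]
      have := G.minDegree_le_degree w
      omega
    rw [hδ] at hcontain
    exact (Nat.pow_le_pow_left (mis_le_of_neighborFinset_eq_pair hN) 2).trans
      (sq_add_add_le (hcontain v) (hcontain u) hcontain_avoid)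
  · refine (Nat.pow_le_pow_left (mis_le_sum_ncard_maxIndepThrough v) 2).trans
      (sq_sum_le_of_forall_sq_mul_le ?_ fun x _ => ?_)
    all_goals rw [hclosed, ← hv]
    exacts [by omega, hcontain x]

end TriangleFree

theorem mis_sq_le_two_pow_card {V : Type*} [Fintype V] {G : SimpleGraph V}
    (hG : G.CliqueFree 3) : mis G ^ 2 ≤ 2 ^ Fintype.card V := by
  induction hn : Fintype.card V using Nat.strong_induction_on generalizing V with
  | _ n ih =>
  classical
  rcases isEmpty_or_nonempty V with hV | hV
  · calc mis G ^ 2 ≤ 1 ^ 2 := Nat.pow_le_pow_left (Set.ncard_le_one_of_subsingleton _) 2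
      _ ≤ 2 ^ n := by simpa using Nat.one_le_two_pow
  subst hn
  refine mis_sq_le_of_forall_induce_compl hG fun A hA => ?_
  have hcard : Fintype.card ↥(↑A : Set V)ᶜ = Fintype.card V - A.card := by
    rw [Fintype.card_compl_set]
    simp
  have hAle : A.card ≤ Fintype.card V := Finset.card_le_univ A
  have hApos : 0 < A.card := Finset.card_pos.mpr hA
  calc mis (G.induce (↑A : Set V)ᶜ) ^ 2 * 2 ^ A.card
      ≤ 2 ^ (Fintype.card V - A.card) * 2 ^ A.card :=
        Nat.mul_le_mul_right _ (ih _ (by omega)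
          (hG.comap (SimpleGraph.Embedding.induce _).isContained) hcard)
    _ = 2 ^ Fintype.card V := by rw [← pow_add, Nat.sub_add_cancel hAle]

section UnionOfCliques

variable {ι κ : Type*}

def graphFinset [Fintype ι] (f : ι → κ) : Finset (ι × κ) :=
  Finset.univ.map ⟨fun i => (i, f i), fun _ _ h => (Prod.ext_iff.mp h).1⟩

theorem mem_graphFinset [Fintype ι] {f : ι → κ} {p : ι × κ} :
    p ∈ graphFinset f ↔ p.2 = f p.1 := by
  simp only [graphFinset, Finset.mem_map, Finset.mem_univ, true_and]
  constructor
  · rintro ⟨i, rfl⟩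
    rfl
  · intro h
    exact ⟨p.1, Prod.ext rfl h.symm⟩

theorem graphFinset_injective [Fintype ι] :
    Function.Injective (graphFinset : (ι → κ) → Finset (ι × κ)) := by
  intro f g hfg
  funext i
  exact mem_graphFinset.mp (hfg ▸ mem_graphFinset.mpr rfl : (i, f i) ∈ graphFinset g)

theorem setOf_isMaxIndepFinset_bot_boxProd_top [Fintype ι] [Nonempty κ] :
    {S | IsMaxIndepFinset ((⊥ : SimpleGraph ι) □ (⊤ : SimpleGraph κ)) S} =
      Set.range graphFinset := by
  ext S
  rw [Set.mem_ofPred_eq, isMaxIndepFinset_iff]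
  constructor
  · rintro ⟨hind, hdom⟩
    have hmeet : ∀ i, ∃ k, (i, k) ∈ S := fun i => by
      obtain ⟨k⟩ := ‹Nonempty κ›
      by_cases hk : (i, k) ∈ S
      · exact ⟨k, hk⟩
      · obtain ⟨⟨j, l⟩, hjl, hadj⟩ := hdom _ hk
        obtain ⟨-, rfl⟩ : k ≠ l ∧ i = j := by simpa using hadj
        exact ⟨l, hjl⟩
    choose f hf using hmeet
    refine ⟨f, Finset.ext fun ⟨i, k⟩ => ⟨fun h => ?_, fun hk => mem_graphFinset.mpr ?_⟩⟩
    · obtain rfl : k = f i := mem_graphFinset.mp h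
      exact hf i
    · by_contra hne
      exact hind hk (hf i) (by simpa using hne)
  · rintro ⟨f, rfl⟩
    refine ⟨fun a ha b hb hab => ?_, fun ⟨i, k⟩ hk => ⟨(i, f i), mem_graphFinset.mpr rfl, ?_⟩⟩
    · obtain ⟨hne, hab⟩ : a.2 ≠ b.2 ∧ a.1 = b.1 := by simpa using hab
      rw [mem_graphFinset] at ha hb
      exact hne (by rw [ha, hb, hab])
    · simpa [mem_graphFinset] using hk

theorem mis_bot_boxProd_top [Fintype ι] [Nonempty κ] :
    mis ((⊥ : SimpleGraph ι) □ (⊤ : SimpleGraph κ)) = Nat.card κ ^ Nat.card ι := by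
  rw [mis, setOf_isMaxIndepFinset_bot_boxProd_top, ← Nat.card_coe_set_eq,
    Nat.card_range_of_injective graphFinset_injective, Nat.card_fun]

theorem cliqueFree_bot_boxProd_top [Fintype κ] :
    ((⊥ : SimpleGraph ι) □ (⊤ : SimpleGraph κ)).CliqueFree (Fintype.card κ + 1) :=
  SimpleGraph.Colorable.cliqueFree
    (SimpleGraph.Coloring.mk Prod.snd fun hadj => (by simpa using hadj : _ ∧ _).1).colorable
    (Nat.lt_succ_self _)

end UnionOfCliques

theorem exists_cliqueFree_three_mis_eq (m : ℕ) :
    ∃ G : SimpleGraph (Fin (2 * m)), G.CliqueFree 3 ∧ mis G = 2 ^ m := by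
  let H := (⊥ : SimpleGraph (Fin m)) □ (⊤ : SimpleGraph Bool)
  have hcard : Fintype.card (Fin m × Bool) = 2 * m := by simp [mul_comm]
  refine ⟨H.overFin hcard, ?_, ?_⟩
  · exact cliqueFree_bot_boxProd_top.comap (H.overFinIso hcard).symm.toEmbedding.isContained
  · rw [← (H.overFinIso hcard).mis_eq, mis_bot_boxProd_top]
    simp

theorem hujter_tuza_even_general (n : ℕ) (heven : Even n) :
    (∀ G : SimpleGraph (Fin n), G.CliqueFree 3 → mis G ≤ 2 ^ (n / 2)) ∧
    (∃ G : SimpleGraph (Fin n), G.CliqueFree 3 ∧ mis G = 2 ^ (n / 2)) := by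
  obtain ⟨m, rfl⟩ := heven
  rw [← two_mul, Nat.mul_div_cancel_left m two_pos]
  refine ⟨fun G hG => ?_, exists_cliqueFree_three_mis_eq m⟩
  have h := mis_sq_le_two_pow_card hG
  rw [Fintype.card_fin, pow_mul'] at h
  exact (Nat.pow_le_pow_iff_left two_ne_zero).mp h

theorem hujter_tuza_even (n : ℕ) (hn : 4 ≤ n) (heven : Even n) :
    (∀ G : SimpleGraph (Fin n), G.CliqueFree 3 → mis G ≤ 2 ^ (n / 2)) ∧
    (∃ G : SimpleGraph (Fin n), G.CliqueFree 3 ∧ mis G = 2 ^ (n / 2)) :=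
  hujter_tuza_even_general n heven
end
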